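/- arXiv:1605.02643 — 2 statements merged into one kernel-verified Lean document; each statement's English description precedes it below -/
import Mathlib

section
/- If σ₁, ..., σ_N are i.i.d. geometric random variables (taking values in {1,2,3,...} with P(σ = k) = p(1-p)^{k-1}), then N·(min(σ₁,...,σ_N) − 1) + min{n ∈ {1,...,N} : σ_n = min(σ₁,...,σ_N)} has the same distribution as σ₁. -/
open MeasureTheory ProbabilityTheory

/-! With `q = n / N` and `j = n % N`, the quantity `N (min σ - 1) + J + 1`, where `J` is the first
index attaining the minimum, equals `n + 1` exactly when `min σ = q + 1` and `J = j`, that is, when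
`σ i ≥ q + 2` for `i < j`, `σ j = q + 1` and `σ i ≥ q + 1` for `i > j`. Since
`P(σ i ≥ m + 1) = (1 - p) ^ m`, independence gives this event the probability
`(1 - p) ^ (j (q + 1)) · p (1 - p) ^ q · (1 - p) ^ ((N - j - 1) q) = p (1 - p) ^ n = P(σ 0 = n + 1)`. -/

section FirstArgmin

variable {N : ℕ}

noncomputable def firstArgmin (f : Fin N → ℕ) : ℕ :=
  sInf {n : ℕ | ∃ h : n < N, f ⟨n, h⟩ = ⨅ i, f i}

def firstMinSet (m j i : ℕ) : Set ℕ :=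
  if i < j then Set.Ici (m + 1) else if i = j then {m} else Set.Ici m

theorem firstArgmin_le {f : Fin N → ℕ} {n : ℕ} (hn : n < N) (h : f ⟨n, hn⟩ = ⨅ i, f i) :
    firstArgmin f ≤ n :=
  Nat.sInf_le ⟨hn, h⟩

theorem firstArgmin_spec [Nonempty (Fin N)] (f : Fin N → ℕ) :
    ∃ h : firstArgmin f < N, f ⟨firstArgmin f, h⟩ = ⨅ i, f i := by
  obtain ⟨i, hi⟩ := Finite.exists_min f
  exact Nat.sInf_mem (s := {n : ℕ | ∃ h : n < N, f ⟨n, h⟩ = ⨅ i, f i})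
    ⟨i, i.isLt, le_antisymm (le_ciInf hi) (ciInf_le (OrderBot.bddBelow _) i)⟩

theorem iInf_eq_and_firstArgmin_eq_iff (f : Fin N → ℕ) {m j : ℕ} (hj : j < N) :
    (⨅ i, f i) = m ∧ firstArgmin f = j ↔ ∀ i : Fin N, f i ∈ firstMinSet m j i := by
  have : Nonempty (Fin N) := ⟨⟨j, hj⟩⟩
  obtain ⟨hlt, hmin⟩ := firstArgmin_spec f
  have hle : ∀ i, ⨅ i, f i ≤ f i := ciInf_le (OrderBot.bddBelow _)
  constructor
  · rintro ⟨rfl, rfl⟩ i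
    unfold firstMinSet
    split_ifs with hij hij
    · have hne : f i ≠ ⨅ i, f i := fun h => (firstArgmin_le i.isLt h).not_gt hij
      exact (hle i).lt_of_ne' hne
    · rw [Set.mem_singleton_iff, ← hmin]
      exact congrArg f (Fin.ext hij)
    · exact hle i
  · intro h
    have hfj : f ⟨j, hj⟩ = m := by simpa [firstMinSet] using h ⟨j, hj⟩
    have hge : ∀ i, m ≤ f i := fun i => by
      have := h i
      unfold firstMinSet at this
      split_ifs at this
      · exact (Nat.le_succ m).trans this
      · exact (Set.mem_singleton_iff.mp this).ge
      · exact this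
    have hinf : (⨅ i, f i) = m := le_antisymm (hfj ▸ hle _) (le_ciInf hge)
    refine ⟨hinf, le_antisymm (firstArgmin_le hj (hfj.trans hinf.symm)) ?_⟩
    by_contra! hfirst
    have := h ⟨firstArgmin f, hlt⟩
    simp only [firstMinSet, hfirst, if_true, Set.mem_Ici, hmin, hinf] at this
    omega

end FirstArgmin

theorem mul_pred_iInf_add_firstArgmin_eq_succ_iff {N : ℕ} (hN : 0 < N) {f : Fin N → ℕ}
    (hf : ∀ i, 1 ≤ f i) (n : ℕ) :
    N * ((⨅ i, f i) - 1) + (firstArgmin f + 1) = n + 1 ↔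
      ∀ i : Fin N, f i ∈ firstMinSet (n / N + 1) (n % N) i := by
  have : Nonempty (Fin N) := ⟨⟨0, hN⟩⟩
  obtain ⟨hlt, -⟩ := firstArgmin_spec f
  have hinf : 1 ≤ ⨅ i, f i := le_ciInf hf
  rw [← iInf_eq_and_firstArgmin_eq_iff f (Nat.mod_lt n hN)]
  have hdiv := Nat.div_mod_unique hN (a := n) (d := (⨅ i, f i) - 1) (c := firstArgmin f)
  constructor
  · intro h
    have := hdiv.mpr ⟨by omega, hlt⟩
    omega
  · rintro ⟨h1, h2⟩
    have := hdiv.mp ⟨by omega, by omega⟩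
    omega

section Geometric

variable {Ω : Type*} [MeasurableSpace Ω] {μ : Measure Ω} {X : Ω → ℕ} {p : ℝ}

theorem measure_eq_succ_of_geometric (hp0 : 0 ≤ p) (hp1 : p ≤ 1)
    (hgeom : ∀ k : ℕ, 1 ≤ k → μ {ω | X ω = k} = ENNReal.ofReal (p * (1 - p) ^ (k - 1)))
    (k : ℕ) :
    μ {ω | X ω = k + 1} = ENNReal.ofReal p * ENNReal.ofReal (1 - p) ^ k := by
  rw [hgeom (k + 1) k.succ_pos, Nat.add_sub_cancel, ENNReal.ofReal_mul hp0,
    ENNReal.ofReal_pow (sub_nonneg.mpr hp1)]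

theorem measure_preimage_Ici_succ_of_geometric [IsProbabilityMeasure μ] (hX : Measurable X)
    (hpos : ∀ ω, 1 ≤ X ω) (hp0 : 0 ≤ p) (hp1 : p ≤ 1)
    (hgeom : ∀ k : ℕ, 1 ≤ k → μ {ω | X ω = k} = ENNReal.ofReal (p * (1 - p) ^ (k - 1)))
    (m : ℕ) :
    μ (X ⁻¹' Set.Ici (m + 1)) = ENNReal.ofReal (1 - p) ^ m := by
  induction m with
  | zero => simp [Set.preimage, hpos]
  | succ m ih =>
    have hsplit : X ⁻¹' Set.Ici (m + 1) = {ω | X ω = m + 1} ∪ X ⁻¹' Set.Ici (m + 1 + 1) := by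
      ext ω; simp only [Set.mem_preimage, Set.mem_Ici, Set.mem_union, Set.mem_ofPred_eq]; omega
    have hdisj : Disjoint {ω | X ω = m + 1} (X ⁻¹' Set.Ici (m + 1 + 1)) :=
      Set.disjoint_left.mpr fun ω h1 h2 => by simp_all
    have hsum : ENNReal.ofReal p + ENNReal.ofReal (1 - p) = 1 := by
      rw [← ENNReal.ofReal_add hp0 (sub_nonneg.mpr hp1), add_sub_cancel, ENNReal.ofReal_one]
    rw [hsplit, measure_union hdisj (hX measurableSet_Ici),
      measure_eq_succ_of_geometric hp0 hp1 hgeom] at ih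
    refine (ENNReal.add_right_inj (by finiteness)).mp (ih.trans ?_)
    calc ENNReal.ofReal (1 - p) ^ m
        = (ENNReal.ofReal p + ENNReal.ofReal (1 - p)) * ENNReal.ofReal (1 - p) ^ m := by
          rw [hsum, one_mul]
      _ = _ := by ring

theorem measure_preimage_firstMinSet_of_geometric [IsProbabilityMeasure μ] (hX : Measurable X)
    (hpos : ∀ ω, 1 ≤ X ω) (hp0 : 0 ≤ p) (hp1 : p ≤ 1)
    (hgeom : ∀ k : ℕ, 1 ≤ k → μ {ω | X ω = k} = ENNReal.ofReal (p * (1 - p) ^ (k - 1)))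
    (q j i : ℕ) :
    μ (X ⁻¹' firstMinSet (q + 1) j i) = (if i = j then ENNReal.ofReal p else 1) *
      ((if i < j then ENNReal.ofReal (1 - p) else 1) * ENNReal.ofReal (1 - p) ^ q) := by
  unfold firstMinSet
  split_ifs with hlt hij hij'
  · omega
  · rw [one_mul, ← pow_succ', measure_preimage_Ici_succ_of_geometric hX hpos hp0 hp1 hgeom]
  · rw [one_mul, ← measure_eq_succ_of_geometric hp0 hp1 hgeom]; rfl
  · rw [one_mul, one_mul, measure_preimage_Ici_succ_of_geometric hX hpos hp0 hp1 hgeom]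

end Geometric

theorem Fin.prod_ite_eq_mul_ite_lt_mul_pow {M : Type*} [CommMonoid M] (a r : M) {N j : ℕ}
    (hj : j < N) (q : ℕ) :
    ∏ i : Fin N, (if (i : ℕ) = j then a else 1) * ((if (i : ℕ) < j then r else 1) * r ^ q) =
      a * r ^ (N * q + j) := by
  have hfilter : {i ∈ Finset.range N | i < j} = Finset.range j := by
    ext; simp only [Finset.mem_filter, Finset.mem_range]; omega
  rw [Finset.prod_mul_distrib, Finset.prod_mul_distrib,
    Fin.prod_univ_eq_prod_range (fun i => if i = j then a else 1), Finset.prod_ite_eq',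
    Fin.prod_univ_eq_prod_range (fun i => if i < j then r else 1), ← Finset.prod_filter, hfilter]
  simp [hj, pow_add, pow_mul', mul_comm]

/-- If `σ 1, ..., σ N` are i.i.d. geometric random variables on `{1,2,...}` with
`P(σ = k) = p (1-p)^(k-1)`, then `N·(min σ − 1) + (smallest 1-based index attaining the min)`
has the same distribution as `σ 1`. -/
theorem parRep_geometric_min
    {Ω : Type*} [MeasureSpace Ω] [IsProbabilityMeasure (ℙ : Measure Ω)]
    (N : ℕ) (hN : 0 < N) (p : ℝ) (hp0 : 0 < p) (hp1 : p < 1)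
    (σ : Fin N → Ω → ℕ)
    (hmeas : ∀ i, Measurable (σ i))
    (hpos : ∀ i ω, 1 ≤ σ i ω)
    (hindep : iIndepFun σ ℙ)
    (hgeom : ∀ i, ∀ k : ℕ, 1 ≤ k →
      ℙ {ω | σ i ω = k} = ENNReal.ofReal (p * (1 - p) ^ (k - 1))) :
    ∀ k : ℕ,
      ℙ {ω | N * ((⨅ i, σ i ω) - 1)
          + (sInf {n : ℕ | ∃ h : n < N, σ ⟨n, h⟩ ω = ⨅ i, σ i ω} + 1) = k}
        = ℙ {ω | σ ⟨0, hN⟩ ω = k} := by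
  rintro (_ | n)
  · have hempty : {ω | σ ⟨0, hN⟩ ω = 0} = ∅ :=
      Set.eq_empty_of_forall_notMem fun ω => Nat.one_le_iff_ne_zero.mp (hpos _ ω)
    rw [hempty]
    congr 1
    exact Set.eq_empty_of_forall_notMem fun ω h => Nat.succ_ne_zero _ h
  have hevent : {ω | N * ((⨅ i, σ i ω) - 1) + (firstArgmin (σ · ω) + 1) = n + 1} =
      ⋂ i ∈ Finset.univ, σ i ⁻¹' firstMinSet (n / N + 1) (n % N) i := by
    ext ω
    simpa using mul_pred_iInf_add_firstArgmin_eq_succ_iff hN (hpos · ω) n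
  calc ℙ {ω | N * ((⨅ i, σ i ω) - 1) + (firstArgmin (σ · ω) + 1) = n + 1}
      = ∏ i : Fin N, ℙ (σ i ⁻¹' firstMinSet (n / N + 1) (n % N) i) := by
        rw [hevent, hindep.measure_inter_preimage_eq_mul _ fun _ _ => .of_discrete]
    _ = ENNReal.ofReal p * ENNReal.ofReal (1 - p) ^ (N * (n / N) + n % N) := by
        simp_rw [measure_preimage_firstMinSet_of_geometric (hmeas _) (hpos _) hp0.le hp1.le
          (hgeom _)]
        exact Fin.prod_ite_eq_mul_ite_lt_mul_pow _ _ (Nat.mod_lt n hN) _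
    _ = ℙ {ω | σ ⟨0, hN⟩ ω = n + 1} := by
        rw [Nat.div_add_mod, measure_eq_succ_of_geometric hp0.le hp1.le (hgeom _)]
end

section
/- Let τ¹,...,τ^N be i.i.d. pairs (τⁿ, Xⁿ) where τⁿ ~ Exp(λ), Xⁿ takes values in a measurable space E, and τⁿ is independent of Xⁿ. Let I₀ = argmin_n τⁿ (a.s. unique). Then the pair (N·min_n τⁿ, X^{I₀}) has the same joint law as (τ¹, X¹). -/
/-!
Off the null event of ties, `I₀ = n` exactly when `τ n` is the strict minimum, an event
determined by the exit times alone. As `X n` is independent of all the exit times,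
`ℙ(N * min τ ∈ s, X I₀ ∈ B) = ∑ n, ℙ(N * min τ ∈ s, I₀ = n) ℙ(X n ∈ B)`, which is
`ℙ(N * min τ ∈ s) ℙ(X 0 ∈ B)`.
The minimum of `N` independent `Exp(l)` times is `Exp(N l)`, so `N * min τ` has the law of `τ 0`,
which is independent of `X 0`.
-/

open MeasureTheory ProbabilityTheory Real Set

namespace ProbabilityTheory

variable {Ω β γ δ : Type*} {mΩ : MeasurableSpace Ω} [MeasurableSpace β] [MeasurableSpace γ]
  [MeasurableSpace δ] {μ : Measure Ω}

lemma IndepFun.indepFun_prodMk_of_indepFun_prodMk [IsProbabilityMeasure μ]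
    {Y : Ω → β} {Z : Ω → γ} {W : Ω → δ}
    (hY : Measurable Y) (hZ : Measurable Z) (hW : Measurable W)
    (hYZ : IndepFun Y Z μ) (hYZW : IndepFun (fun ω ↦ (Y ω, Z ω)) W μ) :
    IndepFun Z (fun ω ↦ (Y ω, W ω)) μ := by
  rw [indepFun_iff_map_prod_eq_prod_map_map hY.aemeasurable hZ.aemeasurable] at hYZ
  rw [indepFun_iff_map_prod_eq_prod_map_map (hY.prodMk hZ).aemeasurable hW.aemeasurable,
    hYZ] at hYZW
  rw [indepFun_iff_map_prod_eq_prod_map_map hZ.aemeasurable (hY.prodMk hW).aemeasurable]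
  have : IsProbabilityMeasure (μ.map Z) := Measure.isProbabilityMeasure_map hZ.aemeasurable
  have hYW : μ.map (fun ω ↦ (Y ω, W ω)) = (μ.map Y).prod (μ.map W) := by
    calc μ.map (fun ω ↦ (Y ω, W ω))
        = (μ.map fun ω ↦ ((Y ω, Z ω), W ω)).map (Prod.map Prod.fst id) := by
          rw [Measure.map_map (by fun_prop) (by fun_prop)]; rfl
      _ = (μ.map Y).prod (μ.map W) := by
          rw [hYZW, ← Measure.map_prod_map _ _ measurable_fst measurable_id,
            Measure.map_fst_prod, Measure.map_id, measure_univ, one_smul]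
  calc μ.map (fun ω ↦ (Z ω, Y ω, W ω))
      = ((μ.map fun ω ↦ ((Y ω, Z ω), W ω)).map (Prod.map Prod.swap id)).map
          MeasurableEquiv.prodAssoc := by
        rw [Measure.map_map (by fun_prop) (by fun_prop), Measure.map_map
          (MeasurableEquiv.prodAssoc.measurable.comp (measurable_swap.prodMap measurable_id))
          (by fun_prop)]
        rfl
    _ = (μ.map Z).prod (μ.map fun ω ↦ (Y ω, W ω)) := by
        rw [hYZW, ← Measure.map_prod_map _ _ measurable_swap measurable_id, Measure.prod_swap,
          Measure.map_id, Measure.prodAssoc_prod, hYW]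

lemma iIndepFun.indepFun_pi_of_indepFun [IsProbabilityMeasure μ] {ι : Type*} [Fintype ι]
    [DecidableEq ι] {Y : ι → Ω → β} {Z : ι → Ω → γ}
    (hY : ∀ i, Measurable (Y i)) (hZ : ∀ i, Measurable (Z i))
    (h : iIndepFun (fun i ω ↦ (Y i ω, Z i ω)) μ) {i : ι} (hYZ : IndepFun (Y i) (Z i) μ) :
    IndepFun (Z i) (fun ω j ↦ Y j ω) μ := by
  have hpair_rest : IndepFun (fun ω ↦ (Y i ω, Z i ω)) (fun ω (j : ({i}ᶜ : Finset ι)) ↦ Y j ω) μ :=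
    (h.indepFun_finset {i} {i}ᶜ disjoint_compl_right fun j ↦ (hY j).prodMk (hZ j)).comp
      (φ := fun p ↦ p ⟨i, Finset.mem_singleton_self i⟩) (ψ := fun p j ↦ (p j).1)
      (measurable_pi_apply _) (by fun_prop)
  let glue : β × (({i}ᶜ : Finset ι) → β) → ι → β := fun p j ↦
    if hj : j = i then p.1 else p.2 ⟨j, by simpa using hj⟩
  have hglue : Measurable glue := by
    refine measurable_pi_lambda _ fun j ↦ ?_
    by_cases hj : j = i
    · simpa [glue, hj] using measurable_fst
    · simp only [glue, hj, dite_false]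
      exact (measurable_pi_apply _).comp measurable_snd
  have hglue_eq : (fun ω j ↦ Y j ω) =
      glue ∘ fun ω ↦ (Y i ω, fun j : ({i}ᶜ : Finset ι) ↦ Y j ω) := by
    funext ω j
    by_cases hj : j = i
    · subst hj; simp [glue]
    · simp [glue, hj]
  rw [hglue_eq]
  exact (hYZ.indepFun_prodMk_of_indepFun_prodMk (hY i) (hZ i)
    (measurable_pi_lambda (fun ω (j : ({i}ᶜ : Finset ι)) ↦ Y j ω) fun j ↦ hY j) hpair_rest).comp
    measurable_id hglue

lemma IndepFun.measure_setOf_eq_eq_zero {α : Type*} [MeasurableSpace α] [MeasurableEq α]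
    [IsFiniteMeasure μ] {X Y : Ω → α} (hX : Measurable X) (hY : Measurable Y)
    (h : IndepFun X Y μ) [NullSingletonClass (μ.map Y)] :
    μ {ω | X ω = Y ω} = 0 := by
  have hlaw := (indepFun_iff_map_prod_eq_prod_map_map hX.aemeasurable hY.aemeasurable).1 h
  calc μ {ω | X ω = Y ω} = μ.map (fun ω ↦ (X ω, Y ω)) (diagonal α) := by
        rw [Measure.map_apply (hX.prodMk hY) measurableSet_diagonal]; rfl
    _ = 0 := by
        rw [hlaw, Measure.prod_apply measurableSet_diagonal]
        simp [Set.preimage, diagonal]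

instance nullSingletonClass_expMeasure (r : ℝ) : NullSingletonClass (expMeasure r) := by
  unfold expMeasure gammaMeasure
  infer_instance

lemma map_eq_expMeasure_of_measure_lt [IsProbabilityMeasure μ] {T : Ω → ℝ} (hT : Measurable T)
    {r : ℝ} (hr : 0 < r) (h : ∀ t, 0 ≤ t → μ {ω | t < T ω} = ENNReal.ofReal (exp (-r * t))) :
    μ.map T = expMeasure r := by
  have := isProbabilityMeasure_expMeasure hr
  have := Measure.isProbabilityMeasure_map (μ := μ) hT.aemeasurable
  have hIoi : ∀ t, 0 ≤ t → μ.map T (Ioi t) = ENNReal.ofReal (exp (-r * t)) := fun t ht ↦ by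
    rw [Measure.map_apply hT measurableSet_Ioi]
    exact h t ht
  have hIic : ∀ t, 0 ≤ t → (μ.map T).real (Iic t) = 1 - exp (-r * t) := fun t ht ↦ by
    rw [← compl_Ioi, probReal_compl_eq_one_sub measurableSet_Ioi, measureReal_def, hIoi t ht,
      ENNReal.toReal_ofReal (exp_pos _).le]
  refine Measure.eq_of_cdf _ _ (StieltjesFunction.ext fun x ↦ ?_)
  rw [cdf_expMeasure_eq hr, cdf_eq_real]
  split_ifs with hx
  · rw [hIic x hx, neg_mul]
  · refine measureReal_mono_null (Iic_subset_Iic.2 (not_le.1 hx).le) ?_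
    simpa using hIic 0 le_rfl

lemma iIndepFun.measure_lt_iInf {ι : Type*} [Fintype ι] [Nonempty ι] {τ : ι → Ω → ℝ}
    (h : iIndepFun τ μ) (t : ℝ) :
    μ {ω | t < ⨅ i, τ i ω} = ∏ i, μ {ω | t < τ i ω} := by
  have hmin : {ω | t < ⨅ i, τ i ω} = ⋂ i ∈ Finset.univ, τ i ⁻¹' Ioi t := by
    ext ω
    simp only [mem_ofPred_eq, mem_iInter, Finset.mem_univ, mem_preimage, mem_Ioi, true_implies]
    obtain ⟨j, hj⟩ := exists_eq_ciInf_of_finite (f := fun i ↦ τ i ω)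
    exact ⟨fun ht i ↦ ht.trans_le (ciInf_le (Finite.bddBelow_range _) i), fun ht ↦ hj ▸ ht j⟩
  rw [hmin, h.measure_inter_preimage_eq_mul _ fun _ _ ↦ measurableSet_Ioi]
  rfl

lemma iIndepFun.map_card_mul_iInf_eq_expMeasure {ι : Type*} [IsProbabilityMeasure μ] [Fintype ι]
    [Nonempty ι] {τ : ι → Ω → ℝ} (hτ : ∀ i, Measurable (τ i)) (h : iIndepFun τ μ) {r : ℝ}
    (hr : 0 < r) (hexp : ∀ i t, 0 ≤ t → μ {ω | t < τ i ω} = ENNReal.ofReal (exp (-r * t))) :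
    μ.map (fun ω ↦ (Fintype.card ι : ℝ) * ⨅ i, τ i ω) = expMeasure r := by
  have hcard : (0 : ℝ) < Fintype.card ι := Nat.cast_pos.2 Fintype.card_pos
  refine map_eq_expMeasure_of_measure_lt (measurable_const.mul (.iInf hτ)) hr fun t ht ↦ ?_
  calc μ {ω | t < (Fintype.card ι : ℝ) * ⨅ i, τ i ω}
      = μ {ω | t / Fintype.card ι < ⨅ i, τ i ω} := by simp_rw [div_lt_iff₀' hcard]
    _ = ENNReal.ofReal (exp (-r * t)) := by
      rw [h.measure_lt_iInf]
      simp only [hexp _ _ (div_nonneg ht hcard.le), Finset.prod_const, Finset.card_univ,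
        ← ENNReal.ofReal_pow (exp_nonneg _), ← exp_nat_mul]
      field_simp

end ProbabilityTheory

namespace MeasureTheory

variable {Ω ι : Type*} {mΩ : MeasurableSpace Ω} {μ : Measure Ω}

lemma measure_eq_sum_measure_preimage_singleton_inter [Fintype ι] [MeasurableSpace ι]
    [MeasurableSingletonClass ι] {I : Ω → ι} (hI : Measurable I) (A : Set Ω) :
    μ A = ∑ i, μ (I ⁻¹' {i} ∩ A) := by
  have := sum_measure_preimage_singleton (μ := μ.restrict A) Finset.univ
    fun i _ ↦ hI (measurableSet_singleton i)
  simpa [Measure.restrict_apply (hI (measurableSet_singleton _))] using this.symm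

lemma preimage_argmin_ae_eq [Countable ι] {τ : ι → Ω → ℝ} {I : Ω → ι}
    (hties : ∀ i j, i ≠ j → μ {ω | τ i ω = τ j ω} = 0) (hI : ∀ ω j, τ (I ω) ω ≤ τ j ω) (i : ι) :
    I ⁻¹' {i} =ᵐ[μ] {ω | ∀ j ≠ i, τ i ω < τ j ω} := by
  have hdistinct : ∀ᵐ ω ∂μ, ∀ j k, j ≠ k → τ j ω ≠ τ k ω := by
    simp only [ae_all_iff]
    exact fun j k hjk ↦ measure_eq_zero_iff_ae_notMem.1 (hties j k hjk)
  filter_upwards [hdistinct] with ω hω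
  refine propext ⟨fun (hIi : I ω = i) j hji ↦ ?_, fun hmin ↦ ?_⟩
  · exact (hIi ▸ hI ω j).lt_of_ne (hω i j hji.symm)
  · show I ω = i
    by_contra hIi
    exact (hmin (I ω) hIi).not_ge (hI ω i)

end MeasureTheory

lemma measure_iInf_mem_inter_argmin_mem_eq_mul {Ω ι E : Type*} {mΩ : MeasurableSpace Ω}
    {μ : Measure Ω} [MeasurableSpace E] [Fintype ι] [MeasurableSpace ι] [MeasurableSingletonClass ι]
    {τ : ι → Ω → ℝ} {X : ι → Ω → E} {I : Ω → ι} {ρ : Measure E}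
    (hX : ∀ i, Measurable (X i)) (hI : Measurable I)
    (hXτ : ∀ i, IndepFun (X i) (fun ω j ↦ τ j ω) μ) (hXlaw : ∀ i, μ.map (X i) = ρ)
    (hties : ∀ i j, i ≠ j → μ {ω | τ i ω = τ j ω} = 0) (hmin : ∀ ω, τ (I ω) ω = ⨅ j, τ j ω)
    {s : Set ℝ} (hs : MeasurableSet s) {B : Set E} (hB : MeasurableSet B) :
    μ ({ω | ⨅ j, τ j ω ∈ s} ∩ {ω | X (I ω) ω ∈ B}) = μ {ω | ⨅ j, τ j ω ∈ s} * ρ B := by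
  set A := {ω | ⨅ j, τ j ω ∈ s}
  have hI_le : ∀ ω j, τ (I ω) ω ≤ τ j ω := fun ω j ↦
    (hmin ω).trans_le (ciInf_le (Finite.bddBelow_range _) j)
  have hfiber : ∀ i, μ (I ⁻¹' {i} ∩ (A ∩ {ω | X (I ω) ω ∈ B})) = μ (I ⁻¹' {i} ∩ A) * ρ B := by
    intro i
    let C : Set (ι → ℝ) := {t | t i ∈ s ∧ ∀ j ≠ i, t i < t j}
    have hC : MeasurableSet C := by
      simp only [C, ofPred_and, ofPred_forall]
      exact (measurable_pi_apply i hs).inter <| .iInter fun j ↦ .iInter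
        fun _ ↦ measurableSet_lt (measurable_pi_apply i) (measurable_pi_apply j)
    have hAi : I ⁻¹' {i} ∩ A = I ⁻¹' {i} ∩ τ i ⁻¹' s := by
      ext ω
      refine and_congr_right fun (hIi : I ω = i) ↦ ?_
      simp only [A, mem_preimage, mem_ofPred_eq, ← hmin ω, hIi]
    have hAi_ae : (I ⁻¹' {i} ∩ A : Set Ω) =ᵐ[μ] (fun ω j ↦ τ j ω) ⁻¹' C := by
      rw [hAi, inter_comm]
      exact (ae_eq_refl _).inter (preimage_argmin_ae_eq hties hI_le i)
    calc μ (I ⁻¹' {i} ∩ (A ∩ {ω | X (I ω) ω ∈ B}))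
        = μ (X i ⁻¹' B ∩ (I ⁻¹' {i} ∩ A)) := by
          congr 1
          ext ω
          simp only [mem_inter_iff, mem_preimage, mem_singleton_iff, mem_ofPred_eq]
          constructor
          · rintro ⟨rfl, hA, hB⟩; exact ⟨hB, rfl, hA⟩
          · rintro ⟨hB, rfl, hA⟩; exact ⟨rfl, hA, hB⟩
      _ = μ (X i ⁻¹' B ∩ (fun ω j ↦ τ j ω) ⁻¹' C) := measure_congr ((ae_eq_refl _).inter hAi_ae)
      _ = μ (X i ⁻¹' B) * μ (I ⁻¹' {i} ∩ A) := by
          rw [(hXτ i).measure_inter_preimage_eq_mul _ _ hB hC, measure_congr hAi_ae]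
      _ = μ (I ⁻¹' {i} ∩ A) * ρ B := by
          rw [mul_comm, ← hXlaw i, Measure.map_apply (hX i) hB]
  rw [measure_eq_sum_measure_preimage_singleton_inter hI, Finset.sum_congr rfl fun i _ ↦ hfiber i,
    ← Finset.sum_mul, ← measure_eq_sum_measure_preimage_singleton_inter hI]

/-- Parallel step of the parallel replica algorithm: for `N` i.i.d. pairs `(τ n, X n)` with
`τ n ~ Exp(l)` independent of the exit point `X n`, if `I₀` selects the (a.s. unique) index
of the replica with smallest exit time, then `(N · min_n τ n, X (I₀))` has the same joint
law as `(τ 1, X 1)`. -/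
theorem parRep_parallel_step_exact
    {Ω : Type*} [MeasureSpace Ω] [IsProbabilityMeasure (ℙ : Measure Ω)]
    {E : Type*} [MeasurableSpace E]
    (N : ℕ) (hN : 0 < N) (l : ℝ) (hl : 0 < l)
    (τ : Fin N → Ω → ℝ) (X : Fin N → Ω → E)
    (hτmeas : ∀ n, Measurable (τ n)) (hXmeas : ∀ n, Measurable (X n))
    -- the pairs (τ n, X n) are independent
    (hiid : iIndepFun (fun n ω => (τ n ω, X n ω)) ℙ)
    -- the pairs are identically distributed
    (hid : ∀ n, Measure.map (fun ω => (τ n ω, X n ω)) ℙ = Measure.map (fun ω => (τ ⟨0, hN⟩ ω, X ⟨0, hN⟩ ω)) ℙ)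
    -- each exit time is Exp(l)
    (hexp : ∀ n, ∀ t : ℝ, 0 ≤ t →
      ℙ {ω | t < τ n ω} = ENNReal.ofReal (Real.exp (-l * t)))
    -- within each pair, exit time and exit point are independent
    (hindep : ∀ n, IndepFun (τ n) (X n) ℙ)
    -- I₀ is a measurable selection of the argmin (a.s. unique)
    (I₀ : Ω → Fin N) (hI₀meas : Measurable I₀)
    (hI₀ : ∀ ω, τ (I₀ ω) ω = ⨅ n, τ n ω) :
    Measure.map (fun ω => ((N : ℝ) * ⨅ n, τ n ω, X (I₀ ω) ω)) ℙ
      = Measure.map (fun ω => (τ ⟨0, hN⟩ ω, X ⟨0, hN⟩ ω)) ℙ := by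
  have : Nonempty (Fin N) := ⟨⟨0, hN⟩⟩
  have hτiid : iIndepFun τ ℙ := hiid.comp (fun _ ↦ Prod.fst) fun _ ↦ measurable_fst
  have hτlaw : ∀ n, Measure.map (τ n) ℙ = expMeasure l := fun n ↦
    map_eq_expMeasure_of_measure_lt (hτmeas n) hl (hexp n)
  have hminlaw : Measure.map (fun ω ↦ (N : ℝ) * ⨅ n, τ n ω) ℙ = Measure.map (τ ⟨0, hN⟩) ℙ := by
    simpa [hτlaw] using hτiid.map_card_mul_iInf_eq_expMeasure hτmeas hl hexp
  have hties : ∀ m n, m ≠ n → ℙ {ω | τ m ω = τ n ω} = 0 := fun m n hmn ↦ by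
    have : NullSingletonClass (Measure.map (τ n) ℙ) := hτlaw n ▸ inferInstance
    exact (hτiid.indepFun hmn).measure_setOf_eq_eq_zero (hτmeas m) (hτmeas n)
  have hXlaw : ∀ n, Measure.map (X n) ℙ = Measure.map (X ⟨0, hN⟩) ℙ := fun n ↦ by
    have h := congrArg (Measure.map Prod.snd) (hid n)
    rwa [Measure.map_map measurable_snd ((hτmeas n).prodMk (hXmeas n)),
      Measure.map_map measurable_snd ((hτmeas _).prodMk (hXmeas _))] at h
  have hmin_meas : Measurable fun ω ↦ (N : ℝ) * ⨅ n, τ n ω := measurable_const.mul (.iInf hτmeas)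
  have hXI_meas : Measurable fun ω ↦ X (I₀ ω) ω :=
    (measurable_from_prod_countable_left (f := fun p : Ω × Fin N ↦ X p.2 p.1) hXmeas).comp
      (measurable_id.prodMk hI₀meas)
  rw [(indepFun_iff_map_prod_eq_prod_map_map (hτmeas _).aemeasurable
    (hXmeas _).aemeasurable).1 (hindep _), ← hminlaw]
  refine (Measure.prod_eq fun s B hs hB ↦ ?_).symm
  rw [Measure.map_apply (hmin_meas.prodMk hXI_meas) (hs.prod hB), Measure.map_apply hmin_meas hs]
  exact measure_iInf_mem_inter_argmin_mem_eq_mul hXmeas hI₀meas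
    (fun n ↦ hiid.indepFun_pi_of_indepFun hτmeas hXmeas (hindep n)) hXlaw hties hI₀
    (measurable_const_mul _ hs) hB
end
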